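/- Let a ≥ 2, b = ⌊log_2 a⌋ + 1, M_a = {x : 0 < x ≤ a, x not a power of 2}, g as defined, H_a = g(M_a) \ M_a, and define f': g(M_a) → M_a by f'(x) = x if x ∈ M_a ∩ g(M_a) and f'(x) = x + 1 - 2⌈m/2⌉ if x ∈ H_a, where m = 2^b - a - 1. Then f' is a well-defined bijection from g(M_a) onto M_a satisfying f'(x) ≤ x for all x ∈ g(M_a). -/

import Mathlib

open scoped Classical

noncomputable section

/-- `b = ⌊log₂ a⌋ + 1`. -/
def bb (a : ℕ) : ℕ := Nat.log 2 a + 1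

/-- `m = 2^b - a - 1`. -/
def mm (a : ℕ) : ℕ := 2 ^ bb a - a - 1

/-- `q = a - 2^(b-1)`. -/
def qq (a : ℕ) : ℕ := a - 2 ^ (bb a - 1)

/-- `M_a = {x : 0 < x ≤ a, x is not a power of 2}`. -/
def Ma (a : ℕ) : Set ℕ := {x | 0 < x ∧ x ≤ a ∧ ¬ ∃ k, x = 2 ^ k}

/-- `g(x) = 2x` if bit `b-1` of `x` is `0`, else `g(x) = 2x + 1 - 2^b`. -/
def gg (a x : ℕ) : ℕ := if x.testBit (bb a - 1) then 2 * x + 1 - 2 ^ bb a else 2 * x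

/-- `f'(x) = x` if `x ∈ M_a`, else `f'(x) = x + 1 - 2⌈m/2⌉` (intended domain `g(M_a)`). -/
def ff' (a x : ℕ) : ℕ := if x ∈ Ma a then x else x + 1 - 2 * ((mm a + 1) / 2)

/-- `f = f' ∘ g`. -/
def ff (a x : ℕ) : ℕ := ff' a (gg a x)

/-- the `j`-th binary digit of `x`, as a natural number. -/
def bitv (x j : ℕ) : ℕ := if x.testBit j then 1 else 0

/-- `h(x) = 2^(f(x)-1) + Σ_{j=0}^{b-2} x_j 2^(2^(j+1)-1) + x_{b-1}`. -/
def hh (a x : ℕ) : ℕ :=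
  2 ^ (ff a x - 1) + (∑ j ∈ Finset.range (bb a - 1), bitv x j * 2 ^ (2 ^ (j + 1) - 1)) +
    bitv x (bb a - 1)

/-- Hamming weight of `x` viewed as a vector in `F_2^a`. -/
def wt (a x : ℕ) : ℕ := ((Finset.range a).filter (fun j => x.testBit j)).card

/-- identification of `Z_{2^a}` with `F_2^a` via radix-2 representation. -/
def toVec (a x : ℕ) : Fin a → ZMod 2 := fun j => if x.testBit (j : ℕ) then 1 else 0

/-- `S`, the `F_2`-span of `M_a' = h(M_a)` inside `F_2^a`. -/
def Ssub (a : ℕ) : Submodule (ZMod 2) (Fin a → ZMod 2) :=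
  Submodule.span (ZMod 2) (toVec a '' (hh a '' Ma a))

/-- `P_a = {0, 2^0, 2^1, …, 2^(a-1)}`. -/
def Pa (a : ℕ) : Set ℕ := {0} ∪ {y | ∃ j < a, y = 2 ^ j}

/-- `Q_a = ∅` if `a+1` is a power of `2`, else `{1 ⊕ 2^j : a-m ≤ j ≤ a-1}`. -/
def Qa (a : ℕ) : Set ℕ :=
  if ∃ k, a + 1 = 2 ^ k then ∅ else {y | ∃ j, a - mm a ≤ j ∧ j < a ∧ y = 1 ^^^ 2 ^ j}

/-- `T_a = P_a ∪ Q_a`. -/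
def Ta (a : ℕ) : Set ℕ := Pa a ∪ Qa a

end

/-! Write `p = 2^(b-1)`, so that `p ≤ a < 2p`. On `M_a` the map `g` doubles the elements below
`p` and sends `p < x ≤ a` to the odd number `2(x - p) + 1`; hence `g(M_a)` consists of the even
non-powers of two below `2p` and the odd numbers `3, …, 2q + 1`, where `q = a - p`. So `f'` is the
identity on `g(M_a) ∩ M_a`, `H_a = g(M_a) \ M_a` is the set of even numbers in `(a, 2p)`, and
`M_a \ g(M_a)` is the set of odd numbers in `(2q + 1, a]`; the translation `x ↦ x + 1 - 2⌈m/2⌉`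
matches these two sets. As `f'(H_a) ⊆ M_a` lies below `a < H_a`, also `f'(x) ≤ x`. -/

open Set

theorem Set.BijOn.of_eqOn_id_inter {α : Type*} {f : α → α} {s t : Set α}
    (hid : EqOn f id (s ∩ t)) (hdiff : BijOn f (s \ t) (t \ s)) : BijOn f s t := by
  have hinter : BijOn f (s ∩ t) (t ∩ s) := by
    rw [inter_comm t]
    exact (bijOn_id _).congr hid.symm
  have hinj : InjOn f (s ∩ t ∪ s \ t) := by
    refine (injOn_union disjoint_sdiff_inter.symm).2 ⟨hinter.injOn, hdiff.injOn, ?_⟩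
    intro x hx y hy hxy
    have hfy := hdiff.mapsTo hy
    rw [← hxy, hid hx] at hfy
    exact hfy.2 hx.1
  simpa only [inter_union_sdiff] using hinter.union hdiff hinj

theorem Nat.testBit_of_two_pow_le_of_lt {x i : ℕ} (h₁ : 2 ^ i ≤ x) (h₂ : x < 2 ^ (i + 1)) :
    x.testBit i = true := by
  rw [← Nat.add_sub_cancel' h₁, Nat.testBit_two_pow_add_eq,
    Nat.testBit_lt_two_pow (by rw [pow_succ] at h₂; omega)]
  rfl

theorem Nat.not_exists_eq_two_pow_of_lt_of_lt {c y : ℕ} (h₁ : 2 ^ c < y) (h₂ : y < 2 ^ (c + 1)) :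
    ¬ ∃ k, y = 2 ^ k := by
  rintro ⟨k, rfl⟩
  have := (Nat.pow_lt_pow_iff_right (by norm_num)).1 h₁
  have := (Nat.pow_lt_pow_iff_right (by norm_num)).1 h₂
  omega

theorem Nat.not_exists_eq_two_pow_of_odd {y : ℕ} (hy : y % 2 = 1) (h : 1 < y) :
    ¬ ∃ k, y = 2 ^ k := by
  rintro ⟨_ | k, rfl⟩
  · simp at h
  · rw [pow_succ] at hy
    omega

theorem bb_sub_one (a : ℕ) : bb a - 1 = Nat.log 2 a := by
  simp [bb]

theorem two_pow_bb (a : ℕ) : 2 ^ bb a = 2 * 2 ^ (bb a - 1) := by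
  rw [bb_sub_one, bb, pow_succ']

theorem two_pow_bb_sub_one_le {a : ℕ} (ha : a ≠ 0) : 2 ^ (bb a - 1) ≤ a := by
  rw [bb_sub_one]
  exact Nat.pow_log_le_self 2 ha

theorem lt_two_pow_bb (a : ℕ) : a < 2 ^ bb a :=
  Nat.lt_pow_succ_log_self (by norm_num) a

theorem gg_of_lt {a x : ℕ} (hx : x < 2 ^ (bb a - 1)) : gg a x = 2 * x := by
  simp [gg, Nat.testBit_lt_two_pow hx]

theorem gg_of_le {a x : ℕ} (h₁ : 2 ^ (bb a - 1) ≤ x) (h₂ : x < 2 ^ bb a) :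
    gg a x = 2 * x + 1 - 2 ^ bb a := by
  rw [two_pow_bb, ← pow_succ'] at h₂
  simp [gg, Nat.testBit_of_two_pow_le_of_lt h₁ h₂]

theorem ff'_of_mem {a x : ℕ} (hx : x ∈ Ma a) : ff' a x = x :=
  if_pos hx

theorem ff'_of_notMem {a x : ℕ} (hx : x ∉ Ma a) :
    ff' a x = x + 1 - 2 * ((mm a + 1) / 2) :=
  if_neg hx

theorem mem_gg_image_Ma_iff {a y : ℕ} (ha : a ≠ 0) :
    y ∈ gg a '' Ma a ↔ (y % 2 = 0 ∧ 0 < y ∧ y < 2 ^ bb a ∧ ¬ ∃ k, y = 2 ^ k) ∨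
      (y % 2 = 1 ∧ 3 ≤ y ∧ y ≤ 2 * qq a + 1) := by
  have hp := two_pow_bb_sub_one_le ha
  have hpow := two_pow_bb a
  have ha2 := lt_two_pow_bb a
  rw [qq]
  constructor
  · rintro ⟨x, ⟨hx0, hxa, hxp⟩, rfl⟩
    rcases lt_or_ge x (2 ^ (bb a - 1)) with hx | hx
    · rw [gg_of_lt hx]
      refine Or.inl ⟨by omega, by omega, by omega, ?_⟩
      rintro ⟨_ | k, hk⟩
      · omega
      · exact hxp ⟨k, by rw [pow_succ] at hk; omega⟩
    · have hxne : x ≠ 2 ^ (bb a - 1) := fun h => hxp ⟨_, h⟩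
      rw [gg_of_le hx (by omega)]
      omega
  · rintro (⟨h2, hy0, hy, hyp⟩ | ⟨h2, hy3, hy⟩)
    · refine ⟨y / 2, ⟨by omega, by omega, ?_⟩, ?_⟩
      · rintro ⟨k, hk⟩
        exact hyp ⟨k + 1, by rw [pow_succ]; omega⟩
      · rw [gg_of_lt (by omega)]
        omega
    · refine ⟨2 ^ (bb a - 1) + y / 2, ⟨by omega, by omega, ?_⟩, ?_⟩
      · exact Nat.not_exists_eq_two_pow_of_lt_of_lt (c := bb a - 1) (by omega)
          (by rw [pow_succ]; omega)
      · rw [gg_of_le (by omega) (by omega)]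
        omega

theorem gg_image_diff_Ma {a : ℕ} (ha : a ≠ 0) :
    gg a '' Ma a \ Ma a = {y | y % 2 = 0 ∧ a < y ∧ y < 2 ^ bb a} := by
  have hp := two_pow_bb_sub_one_le ha
  have hpow := two_pow_bb a
  have ha2 := lt_two_pow_bb a
  ext y
  rw [mem_sdiff, mem_gg_image_Ma_iff ha]
  simp only [Ma, qq, mem_ofPred_eq]
  constructor
  · rintro ⟨⟨h2, hy0, hy, hyp⟩ | ⟨h2, hy3, hy⟩, hyM⟩
    · exact ⟨h2, by by_contra h; exact hyM ⟨hy0, by omega, hyp⟩, hy⟩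
    · exact absurd ⟨by omega, by omega, Nat.not_exists_eq_two_pow_of_odd h2 (by omega)⟩ hyM
  · rintro ⟨h2, hay, hy⟩
    refine ⟨Or.inl ⟨h2, by omega, hy, ?_⟩, by omega⟩
    exact Nat.not_exists_eq_two_pow_of_lt_of_lt (c := bb a - 1) (by omega)
      (by rw [pow_succ]; omega)

theorem Ma_diff_gg_image {a : ℕ} (ha : a ≠ 0) :
    Ma a \ gg a '' Ma a = {z | z % 2 = 1 ∧ 2 * qq a + 1 < z ∧ z ≤ a} := by
  have ha2 := lt_two_pow_bb a
  ext z
  rw [mem_sdiff, mem_gg_image_Ma_iff ha]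
  simp only [Ma, qq, mem_ofPred_eq]
  constructor
  · rintro ⟨⟨hz0, hza, hzp⟩, hz⟩
    have hz1 : z ≠ 1 := fun h => hzp ⟨0, h⟩
    rcases Nat.mod_two_eq_zero_or_one z with h2 | h2
    · exact absurd (Or.inl ⟨h2, hz0, by omega, hzp⟩) hz
    · exact ⟨h2, by by_contra h; exact hz (Or.inr ⟨h2, by omega, by omega⟩), hza⟩
  · rintro ⟨h2, hz, hza⟩
    exact ⟨⟨by omega, hza, Nat.not_exists_eq_two_pow_of_odd h2 (by omega)⟩, by omega⟩

theorem bijOn_shift_evens_odds {a : ℕ} (ha : a ≠ 0) :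
    BijOn (fun y => y + 1 - 2 * ((mm a + 1) / 2)) {y | y % 2 = 0 ∧ a < y ∧ y < 2 ^ bb a}
      {z | z % 2 = 1 ∧ 2 * qq a + 1 < z ∧ z ≤ a} := by
  have hp := two_pow_bb_sub_one_le ha
  have hpow := two_pow_bb a
  have hmm : mm a = 2 ^ bb a - a - 1 := rfl
  rw [qq]
  refine ⟨?_, ?_, ?_⟩
  · intro y ⟨_, _, _⟩
    simp only [mem_ofPred_eq]
    omega
  · intro y₁ ⟨_, _, _⟩ y₂ ⟨_, _, _⟩ h
    simp only at h
    omega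
  · intro z ⟨_, _, _⟩
    exact ⟨z - 1 + 2 * ((mm a + 1) / 2), ⟨by omega, by omega, by omega⟩, by simp only; omega⟩

theorem bijOn_ff'_diff {a : ℕ} (ha : a ≠ 0) :
    BijOn (ff' a) (gg a '' Ma a \ Ma a) (Ma a \ gg a '' Ma a) := by
  rw [gg_image_diff_Ma ha, Ma_diff_gg_image ha]
  refine (bijOn_shift_evens_odds ha).congr fun y ⟨_, hay, _⟩ => ?_
  exact (ff'_of_notMem fun hy => absurd hy.2.1 (by omega)).symm

/-- `f'` is a well-defined bijection from `g(M_a)` onto `M_a`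
with `f'(x) ≤ x` for all `x ∈ g(M_a)`. -/
theorem f'_bijOn (a : ℕ) (ha : 2 ≤ a) :
    Set.BijOn (ff' a) (gg a '' Ma a) (Ma a) ∧ ∀ x ∈ gg a '' Ma a, ff' a x ≤ x := by
  have ha0 : a ≠ 0 := by omega
  refine ⟨(bijOn_ff'_diff ha0).of_eqOn_id_inter fun _ hx => ff'_of_mem hx.2, fun x hx => ?_⟩
  by_cases hxM : x ∈ Ma a
  · exact (ff'_of_mem hxM).le
  · have hxH : x ∈ gg a '' Ma a \ Ma a := ⟨hx, hxM⟩
    have hfx : ff' a x ≤ a := ((bijOn_ff'_diff ha0).mapsTo hxH).1.2.1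
    rw [gg_image_diff_Ma ha0] at hxH
    exact hfx.trans hxH.2.1.le
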